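/- arXiv:1903.03317 — 3 statements merged into one kernel-verified Lean document; each statement's English description precedes it below -/
import Mathlib

section
/- Let Λ ⊂ ℝᵈ be a bounded measurable region with Lebesgue volume |Λ|, and let M ≥ 1 and C > 0. Suppose for each m ∈ ℕ that j_m : Λ^m → [0,∞) is measurable with j_m ≤ M^m C pointwise (where j₀ is a constant in [0, C]), and that the normalization Σ_{m=0}^∞ (1/m!) ∫_{Λ^m} j_m(x₁,…,x_m) dx₁⋯dx_m = 1 holds. Then the entropy series Σ_{m=0}^∞ (1/m!) ∫_{Λ^m} j_m(x₁,…,x_m) log(j_m(x₁,…,x_m)) dx₁⋯dx_m converges absolutely to a finite real number, with the convention 0·log 0 = 0. -/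
/-! For `0 ≤ t ≤ B` the bounds `1 - 1/t ≤ log t ≤ t - 1` give `|t log t| ≤ 1 + B²`. With
`B = Mᵐ C` the `m`-th term of the entropy series is therefore at most
`(1 + M²ᵐ C²) |Λ|ᵐ / m!`, and these sum to `e^|Λ| + C² e^(M²|Λ|) < ∞`. -/

open MeasureTheory ENNReal

theorem abs_mul_log_le_one_add_sq {t B : ℝ} (ht : 0 ≤ t) (htB : t ≤ B) :
    |t * Real.log t| ≤ 1 + B ^ 2 := by
  rcases ht.eq_or_lt with rfl | ht
  · simp only [zero_mul, abs_zero]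
    positivity
  have hlog_upper := Real.log_le_sub_one_of_pos ht
  have hlog_lower : t * (1 - t⁻¹) ≤ t * Real.log t :=
    mul_le_mul_of_nonneg_left (Real.one_sub_inv_le_log_of_pos ht) ht.le
  rw [mul_one_sub, mul_inv_cancel₀ ht.ne'] at hlog_lower
  rw [abs_le]
  constructor <;> nlinarith

theorem summable_one_add_sq_pow_mul_pow_div_factorial (M C V : ℝ) :
    Summable fun m : ℕ => (1 + (M ^ m * C) ^ 2) * V ^ m / m.factorial := by
  have hsplit : (fun m : ℕ => (1 + (M ^ m * C) ^ 2) * V ^ m / m.factorial) =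
      fun m => V ^ m / m.factorial + C ^ 2 * ((M ^ 2 * V) ^ m / m.factorial) := by
    ext m
    ring
  rw [hsplit]
  exact (Real.summable_pow_div_factorial V).add
    ((Real.summable_pow_div_factorial (M ^ 2 * V)).mul_left (C ^ 2))

section CubeIntegrals

variable {α : Type*} [MeasureSpace α] [SigmaFinite (volume : Measure α)]

theorem volume_univ_pi_const (s : Set α) (m : ℕ) :
    volume (Set.univ.pi fun _ : Fin m => s) = volume s ^ m := by
  simp [volume_pi_pi]

variable {s : Set α} {m : ℕ} {g : (Fin m → α) → ℝ} {K : ℝ}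

theorem inv_factorial_mul_setLIntegral_univ_pi_le (hs : volume s < ∞) (hg : ∀ x, |g x| ≤ K) :
    (m.factorial : ℝ≥0∞)⁻¹ * ∫⁻ x in Set.univ.pi (fun _ : Fin m => s), .ofReal |g x| ≤
      .ofReal (K * (volume s).toReal ^ m / m.factorial) := by
  have hbound : ∫⁻ x in Set.univ.pi (fun _ : Fin m => s), .ofReal |g x| ≤
      .ofReal K * volume s ^ m := by
    rw [← volume_univ_pi_const, ← setLIntegral_const]
    exact lintegral_mono fun x => ofReal_le_ofReal (hg x)
  have hfactorial : (0 : ℝ) < m.factorial := by positivity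
  rw [ofReal_div_of_pos hfactorial, ofReal_mul' (by positivity), ofReal_pow toReal_nonneg,
    ofReal_toReal hs.ne, ofReal_natCast, ENNReal.div_eq_inv_mul]
  gcongr

theorem norm_inv_factorial_mul_setIntegral_univ_pi_le (hs : volume s < ∞) (hg : ∀ x, |g x| ≤ K) :
    ‖1 / (m.factorial : ℝ) * ∫ x in Set.univ.pi (fun _ : Fin m => s), g x‖ ≤
      K * (volume s).toReal ^ m / m.factorial := by
  have hcube : volume (Set.univ.pi fun _ : Fin m => s) < ∞ := by
    rw [volume_univ_pi_const]
    exact pow_lt_top hs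
  have hint := norm_setIntegral_le_of_norm_le_const hcube fun x _ =>
    (Real.norm_eq_abs (g x)).trans_le (hg x)
  rw [measureReal_def, volume_univ_pi_const, toReal_pow] at hint
  rw [norm_mul, one_div, norm_inv, Real.norm_natCast, inv_mul_eq_div]
  gcongr

end CubeIntegrals

theorem entropy_series_finite_general {d : ℕ}
    (Λ : Set (EuclideanSpace ℝ (Fin d))) (hΛb : Bornology.IsBounded Λ)
    (M C : ℝ)
    (j : (m : ℕ) → (Fin m → EuclideanSpace ℝ (Fin d)) → ℝ)
    (hjnonneg : ∀ (m : ℕ) (x : Fin m → EuclideanSpace ℝ (Fin d)), 0 ≤ j m x)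
    (hjbound : ∀ (m : ℕ) (x : Fin m → EuclideanSpace ℝ (Fin d)), j m x ≤ M ^ m * C) :
    (∑' m : ℕ, ((m.factorial : ℝ≥0∞))⁻¹ *
        ∫⁻ x in Set.univ.pi (fun _ : Fin m => Λ),
          ENNReal.ofReal |j m x * Real.log (j m x)|) < ⊤ ∧
    Summable (fun m : ℕ => (1 / (m.factorial : ℝ)) *
        ∫ x in Set.univ.pi (fun _ : Fin m => Λ), j m x * Real.log (j m x)) := by
  have hΛ : volume Λ < ∞ := hΛb.measure_lt_top
  have hentropy (m : ℕ) (x) : |j m x * Real.log (j m x)| ≤ 1 + (M ^ m * C) ^ 2 :=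
    abs_mul_log_le_one_add_sq (hjnonneg m x) (hjbound m x)
  have hcomparison := summable_one_add_sq_pow_mul_pow_div_factorial M C (volume Λ).toReal
  exact ⟨(ENNReal.tsum_le_tsum fun m =>
      inv_factorial_mul_setLIntegral_univ_pi_le hΛ (hentropy m)).trans_lt
        hcomparison.tsum_ofReal_lt_top,
    hcomparison.of_norm_bounded fun m =>
      norm_inv_factorial_mul_setIntegral_univ_pi_le hΛ (hentropy m)⟩

/-- Finiteness of the finite-volume entropy functional: if the Janossy-type densities
`j_m : Λ^m → [0,∞)` satisfy the Ruelle-type bound `j_m ≤ M^m C` and the normalization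
`∑_m (1/m!) ∫_{Λ^m} j_m = 1`, then the entropy series
`∑_m (1/m!) ∫_{Λ^m} j_m log j_m` converges absolutely to a finite real number
(with the convention `0·log 0 = 0`, which holds automatically since `Real.log 0 = 0`). -/
theorem entropy_series_finite {d : ℕ} (hd : 1 ≤ d)
    (Λ : Set (EuclideanSpace ℝ (Fin d))) (hΛb : Bornology.IsBounded Λ)
    (hΛm : MeasurableSet Λ)
    (M C : ℝ) (hM : 1 ≤ M) (hC : 0 < C)
    (j : (m : ℕ) → (Fin m → EuclideanSpace ℝ (Fin d)) → ℝ)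
    (hjmeas : ∀ m, Measurable (j m))
    (hjnonneg : ∀ (m : ℕ) (x : Fin m → EuclideanSpace ℝ (Fin d)), 0 ≤ j m x)
    (hjbound : ∀ (m : ℕ) (x : Fin m → EuclideanSpace ℝ (Fin d)), j m x ≤ M ^ m * C)
    (hnorm : ∑' m : ℕ, ((m.factorial : ℝ≥0∞))⁻¹ *
        ∫⁻ x in Set.univ.pi (fun _ : Fin m => Λ), ENNReal.ofReal (j m x) = 1) :
    (∑' m : ℕ, ((m.factorial : ℝ≥0∞))⁻¹ *
        ∫⁻ x in Set.univ.pi (fun _ : Fin m => Λ),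
          ENNReal.ofReal |j m x * Real.log (j m x)|) < ⊤ ∧
    Summable (fun m : ℕ => (1 / (m.factorial : ℝ)) *
        ∫ x in Set.univ.pi (fun _ : Fin m => Λ), j m x * Real.log (j m x)) :=
  entropy_series_finite_general Λ hΛb M C j hjnonneg hjbound
end

section
/- Let u : ℝᵈ → ℝ be measurable and let ρ : ℝᵈ × ℝᵈ → [0,∞) be measurable, bounded, and translation invariant (ρ(x+z,y+z) = ρ(x,y) for all x,y,z). Suppose y ↦ u(y)ρ(y,0) is absolutely integrable over ℝᵈ. Then for every ε > 0 there exists r > 0 such that limsup_{ℓ→∞} | (1/|Λ_ℓ|) ∫_{Δ₂ ∪ Δ₃} u(x−y) ρ(x,y) d(x,y) | ≤ ε, where for r < ℓ the sets are Δ₂ = {(x,y) ∈ Λ_ℓ × Λ_ℓ : x ∈ Λ_ℓ ∖ Λ_{ℓ−r}, |y−x| ≤ r} and Δ₃ = {(x,y) ∈ Λ_ℓ × Λ_ℓ : |x−y| > r}. -/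
/-!
Write `g z = u z * ρ (z, 0)`. By translation invariance `|u (x - y) ρ (x, y)| = |g (x - y)|`, and
the substitution `(x, y) ↦ (x, x - y)` turns an integral of `|g (x - y)|` over
`{x ∈ A, x - y ∈ S}` into `|A| * ∫_S |g|`. Now `Δ₂` lies in `{x ∈ Λ_ℓ ∖ Λ_{ℓ-r}}` and `Δ₃` in
`{x ∈ Λ_ℓ, |x - y| > r}`, so after dividing by `|Λ_ℓ|` the integral is at most
`(1 - (1 - r/ℓ)^d) ‖g‖₁ + ∫_{|z| > r} |g|`. The first term vanishes as `ℓ → ∞`, and the tail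
integral is below `ε` for `r` large since `g` is integrable.
-/

open MeasureTheory ENNReal Filter

/-- The box `Λ_ℓ = [-ℓ,ℓ]^d ⊂ ℝᵈ`. -/
def lam (d : ℕ) (ℓ : ℝ) : Set (EuclideanSpace ℝ (Fin d)) := {x | ∀ i, |x i| ≤ ℓ}

/-- The boundary region `Δ₂ = {(x,y) ∈ Λ_ℓ² : x ∈ Λ_ℓ ∖ Λ_{ℓ-r}, |y-x| ≤ r}`. -/
def delta2 (d : ℕ) (ℓ r : ℝ) :
    Set (EuclideanSpace ℝ (Fin d) × EuclideanSpace ℝ (Fin d)) :=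
  {p | p.1 ∈ lam d ℓ ∧ p.2 ∈ lam d ℓ ∧ p.1 ∉ lam d (ℓ - r) ∧ ‖p.2 - p.1‖ ≤ r}

/-- The off-diagonal region `Δ₃ = {(x,y) ∈ Λ_ℓ² : |x-y| > r}`. -/
def delta3 (d : ℕ) (ℓ r : ℝ) :
    Set (EuclideanSpace ℝ (Fin d) × EuclideanSpace ℝ (Fin d)) :=
  {p | p.1 ∈ lam d ℓ ∧ p.2 ∈ lam d ℓ ∧ r < ‖p.1 - p.2‖}

open Topology

section

variable {G : Type*} [MeasurableSpace G] [AddCommGroup G] [MeasurableAdd₂ G] [MeasurableNeg G]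

theorem measurableEmbedding_prod_sub_fst :
    MeasurableEmbedding (fun p : G × G => (p.1, p.1 - p.2)) :=
  MeasurableEquiv.measurableEmbedding
    { toFun := fun p => (p.1, p.1 - p.2)
      invFun := fun p => (p.1, p.1 - p.2)
      left_inv := fun p => by simp
      right_inv := fun p => by simp
      measurable_toFun := (by fun_prop : Measurable fun p : G × G => (p.1, p.1 - p.2))
      measurable_invFun := (by fun_prop : Measurable fun p : G × G => (p.1, p.1 - p.2)) }

variable (μ : Measure G) [SFinite μ] [μ.IsAddRightInvariant] [μ.IsNegInvariant]

theorem measurePreserving_prod_sub_fst :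
    MeasurePreserving (fun p : G × G => (p.1, p.1 - p.2)) (μ.prod μ) (μ.prod μ) := by
  convert (measurePreserving_prod_add_right μ μ).comp
    ((MeasurePreserving.id μ).prod (Measure.measurePreserving_neg μ)) using 2 with p
  simp [sub_eq_neg_add]

theorem setLIntegral_fst_mem_sub_mem {F : G → ℝ≥0∞} (hF : AEMeasurable F μ) (A S : Set G) :
    ∫⁻ p in {p : G × G | p.1 ∈ A ∧ p.1 - p.2 ∈ S}, F (p.1 - p.2) ∂μ.prod μ =
      μ A * ∫⁻ z in S, F z ∂μ := by
  calc _ = ∫⁻ q in A ×ˢ S, F q.2 ∂μ.prod μ :=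
        (measurePreserving_prod_sub_fst μ).setLIntegral_comp_preimage_emb
          measurableEmbedding_prod_sub_fst (fun q => F q.2) (A ×ˢ S)
    _ = μ A * ∫⁻ z in S, F z ∂μ := by
      rw [← Measure.prod_restrict]
      simpa using lintegral_prod_mul (μ := μ.restrict A) (f := 1) aemeasurable_const
        (hF.restrict (s := S))
end

theorem tendsto_setLIntegral_lt_norm_atTop {E : Type*} [SeminormedAddGroup E] [MeasurableSpace E]
    [OpensMeasurableSpace E] (μ : Measure E) {F : E → ℝ≥0∞} (hF : ∫⁻ z, F z ∂μ ≠ ∞) :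
    Tendsto (fun r : ℝ => ∫⁻ z in {z | r < ‖z‖}, F z ∂μ) atTop (𝓝 0) := by
  have hmeas (r : ℝ) : MeasurableSet {z : E | r < ‖z‖} :=
    measurableSet_lt measurable_const continuous_norm.measurable
  have hanti : Antitone fun r : ℝ => {z : E | r < ‖z‖} :=
    fun r s hrs z (hz : s < ‖z‖) => hrs.trans_lt hz
  have hempty : ⋂ r : ℝ, {z : E | r < ‖z‖} = ∅ :=
    Set.eq_empty_of_forall_notMem fun z hz => lt_irrefl ‖z‖ (Set.mem_iInter.1 hz ‖z‖)
  have hfin : μ.withDensity F {z | 0 < ‖z‖} ≠ ∞ := by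
    rw [withDensity_apply _ (hmeas 0)]
    exact ne_top_of_le_ne_top hF (setLIntegral_le_lintegral _ _)
  simpa [Function.comp_def, withDensity_apply _ (hmeas _), hempty] using
    tendsto_measure_iInter_atTop (μ := μ.withDensity F) (fun r => (hmeas r).nullMeasurableSet)
      hanti ⟨0, hfin⟩

section Box

variable {d : ℕ}

theorem isClosed_lam (ℓ : ℝ) : IsClosed (lam d ℓ) := by
  simp only [lam, Set.ofPred_forall]
  exact isClosed_iInter fun i => isClosed_le (by fun_prop) continuous_const

theorem lam_mono {ℓ' ℓ : ℝ} (h : ℓ' ≤ ℓ) : lam d ℓ' ⊆ lam d ℓ :=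
  fun _ hx i => (hx i).trans h

theorem volume_lam {ℓ : ℝ} (hℓ : 0 ≤ ℓ) : volume (lam d ℓ) = ENNReal.ofReal ((2 * ℓ) ^ d) := by
  have hlam : lam d ℓ = (MeasurableEquiv.toLp 2 (Fin d → ℝ)).symm ⁻¹'
      Set.univ.pi fun _ => Set.Icc (-ℓ) ℓ := by
    ext
    simp [lam, abs_le, Pi.le_def, forall_and]
  rw [hlam, (EuclideanSpace.volume_preserving_symm_measurableEquiv_toLp (Fin d)).measure_preimage
    (MeasurableSet.univ_pi fun _ => measurableSet_Icc).nullMeasurableSet, volume_pi_pi]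
  simp [Real.volume_Icc, ← ENNReal.ofReal_pow (by linarith : 0 ≤ ℓ + ℓ), two_mul]

theorem volume_lam_diff {ℓ r : ℝ} (hr : 0 ≤ r) (hrℓ : r ≤ ℓ) :
    volume (lam d ℓ \ lam d (ℓ - r)) = ENNReal.ofReal ((2 * ℓ) ^ d - (2 * (ℓ - r)) ^ d) := by
  rw [measure_sdiff (lam_mono (by linarith)) (isClosed_lam _).measurableSet.nullMeasurableSet
      (by simp [volume_lam (sub_nonneg.2 hrℓ)]), volume_lam (hr.trans hrℓ),
    volume_lam (sub_nonneg.2 hrℓ), ← ENNReal.ofReal_sub _ (by have := sub_nonneg.2 hrℓ; positivity)]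

theorem lintegral_delta2_union_delta3_le {F : EuclideanSpace ℝ (Fin d) → ℝ≥0∞}
    (hF : AEMeasurable F) (ℓ r : ℝ) :
    ∫⁻ p in delta2 d ℓ r ∪ delta3 d ℓ r, F (p.1 - p.2) ≤
      volume (lam d ℓ \ lam d (ℓ - r)) * (∫⁻ z, F z) +
        volume (lam d ℓ) * ∫⁻ z in {z | r < ‖z‖}, F z := by
  rw [Measure.volume_eq_prod]
  refine (lintegral_union_le _ _ _).trans (add_le_add ?_ ?_)
  · calc _ ≤ ∫⁻ p in {p : EuclideanSpace ℝ (Fin d) × EuclideanSpace ℝ (Fin d) |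
          p.1 ∈ lam d ℓ \ lam d (ℓ - r) ∧ p.1 - p.2 ∈ Set.univ},
          F (p.1 - p.2) ∂volume.prod volume :=
          lintegral_mono_set fun p hp => ⟨⟨hp.1, hp.2.2.1⟩, trivial⟩
      _ = _ := by rw [setLIntegral_fst_mem_sub_mem volume hF, Measure.restrict_univ]
  · calc _ ≤ ∫⁻ p in {p : EuclideanSpace ℝ (Fin d) × EuclideanSpace ℝ (Fin d) |
          p.1 ∈ lam d ℓ ∧ p.1 - p.2 ∈ {z | r < ‖z‖}}, F (p.1 - p.2) ∂volume.prod volume :=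
          lintegral_mono_set fun p hp => ⟨hp.1, hp.2.2⟩
      _ = _ := setLIntegral_fst_mem_sub_mem volume hF _ _

theorem abs_integral_delta2_union_delta3_le {F : EuclideanSpace ℝ (Fin d) → ℝ≥0∞}
    (hF : AEMeasurable F) (hFfin : ∫⁻ z, F z ≠ ∞)
    {f : EuclideanSpace ℝ (Fin d) × EuclideanSpace ℝ (Fin d) → ℝ}
    (hf : ∀ p, ‖f p‖ₑ ≤ F (p.1 - p.2)) {ℓ r : ℝ} (hr : 0 ≤ r) (hrℓ : r < ℓ) :
    |((2 * ℓ) ^ d)⁻¹ * ∫ p in delta2 d ℓ r ∪ delta3 d ℓ r, f p| ≤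
      (1 - (1 - r / ℓ) ^ d) * (∫⁻ z, F z).toReal +
        (∫⁻ z in {z | r < ‖z‖}, F z).toReal := by
  have hℓ : 0 < ℓ := hr.trans_lt hrℓ
  have hT : ∫⁻ z in {z | r < ‖z‖}, F z ≠ ∞ :=
    ne_top_of_le_ne_top hFfin (setLIntegral_le_lintegral _ _)
  have hbound : ‖∫ p in delta2 d ℓ r ∪ delta3 d ℓ r, f p‖ₑ ≤
      ENNReal.ofReal ((2 * ℓ) ^ d - (2 * (ℓ - r)) ^ d) * (∫⁻ z, F z) +
        ENNReal.ofReal ((2 * ℓ) ^ d) * ∫⁻ z in {z | r < ‖z‖}, F z := by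
    calc _ ≤ ∫⁻ p in delta2 d ℓ r ∪ delta3 d ℓ r, ‖f p‖ₑ := enorm_integral_le_lintegral_enorm _
      _ ≤ ∫⁻ p in delta2 d ℓ r ∪ delta3 d ℓ r, F (p.1 - p.2) := lintegral_mono hf
      _ ≤ _ := by
        rw [← volume_lam_diff hr hrℓ.le, ← volume_lam hℓ.le]
        exact lintegral_delta2_union_delta3_le hF ℓ r
  have hreal := ENNReal.toReal_mono (by finiteness) hbound
  rw [toReal_enorm, Real.norm_eq_abs, ENNReal.toReal_add (by finiteness) (by finiteness),
    ENNReal.toReal_mul, ENNReal.toReal_mul,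
    ENNReal.toReal_ofReal (sub_nonneg.2 (by gcongr; linarith)),
    ENNReal.toReal_ofReal (by positivity)] at hreal
  have hshrink : (2 * (ℓ - r)) ^ d = (2 * ℓ) ^ d * (1 - r / ℓ) ^ d := by
    rw [← mul_pow]; field_simp
  calc _ = ((2 * ℓ) ^ d)⁻¹ * |∫ p in delta2 d ℓ r ∪ delta3 d ℓ r, f p| := by
        rw [abs_mul, abs_of_pos (by positivity)]
    _ ≤ ((2 * ℓ) ^ d)⁻¹ * (((2 * ℓ) ^ d - (2 * (ℓ - r)) ^ d) * (∫⁻ z, F z).toReal +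
          (2 * ℓ) ^ d * (∫⁻ z in {z | r < ‖z‖}, F z).toReal) := by gcongr
    _ = _ := by rw [hshrink]; field_simp

end Box

theorem tendsto_one_sub_one_sub_div_pow_atTop (r : ℝ) (d : ℕ) :
    Tendsto (fun ℓ : ℝ => 1 - (1 - r / ℓ) ^ d) atTop (𝓝 0) := by
  have h : Tendsto (fun ℓ : ℝ => r / ℓ) atTop (𝓝 0) := tendsto_const_nhds.div_atTop tendsto_id
  have h1 : Tendsto (fun _ : ℝ => (1 : ℝ)) atTop (𝓝 1) := tendsto_const_nhds
  simpa using h1.sub ((h1.sub h).pow d)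

theorem delta23_limsup_general {d : ℕ}
    (u : EuclideanSpace ℝ (Fin d) → ℝ)
    (ρ : EuclideanSpace ℝ (Fin d) × EuclideanSpace ℝ (Fin d) → ℝ)
    (hti : ∀ x y z : EuclideanSpace ℝ (Fin d), ρ (x + z, y + z) = ρ (x, y))
    (hint : Integrable (fun y : EuclideanSpace ℝ (Fin d) => u y * ρ (y, 0)))
    (ε : ℝ) (hε : 0 < ε) :
    ∃ r : ℝ, 0 < r ∧
      limsup (fun ℓ : ℝ =>
        |((2 * ℓ) ^ d)⁻¹ * ∫ p in delta2 d ℓ r ∪ delta3 d ℓ r, u (p.1 - p.2) * ρ p|)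
        atTop ≤ ε := by
  set F : EuclideanSpace ℝ (Fin d) → ℝ≥0∞ := fun z => ‖u z * ρ (z, 0)‖ₑ
  have hFfin : ∫⁻ z, F z ≠ ∞ := hint.hasFiniteIntegral.ne
  have hf (p : EuclideanSpace ℝ (Fin d) × EuclideanSpace ℝ (Fin d)) :
      ‖u (p.1 - p.2) * ρ p‖ₑ ≤ F (p.1 - p.2) := by
    simp only [F, ← hti (p.1 - p.2) 0 p.2, sub_add_cancel, zero_add, le_refl]
  have htail := (ENNReal.tendsto_toReal zero_ne_top).comp
    (tendsto_setLIntegral_lt_norm_atTop volume hFfin)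
  obtain ⟨r, hT, hr⟩ :=
    ((htail.eventually_lt_const (by simpa using hε)).and (eventually_gt_atTop 0)).exists
  set T := (∫⁻ z in {z | r < ‖z‖}, F z).toReal
  have hlim : Tendsto (fun ℓ => (1 - (1 - r / ℓ) ^ d) * (∫⁻ z, F z).toReal + T) atTop (𝓝 T) := by
    simpa using ((tendsto_one_sub_one_sub_div_pow_atTop r d).mul_const _).add_const T
  refine ⟨r, hr, limsup_le_of_le (isCoboundedUnder_le_of_le atTop fun _ => abs_nonneg _) ?_⟩
  filter_upwards [eventually_gt_atTop r, hlim.eventually_lt_const hT]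
    with ℓ hrℓ hB
  exact (abs_integral_delta2_union_delta3_le hint.aestronglyMeasurable.enorm hFfin hf hr.le
    hrℓ).trans hB.le

/-- For every `ε > 0` there is `r > 0` such that
`limsup_{ℓ→∞} |(1/|Λ_ℓ|) ∫_{Δ₂ ∪ Δ₃} u(x-y) ρ(x,y) d(x,y)| ≤ ε`, with `|Λ_ℓ| = (2ℓ)^d`. -/
theorem delta23_limsup {d : ℕ} (hd : 1 ≤ d)
    (u : EuclideanSpace ℝ (Fin d) → ℝ) (humeas : Measurable u)
    (ρ : EuclideanSpace ℝ (Fin d) × EuclideanSpace ℝ (Fin d) → ℝ)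
    (hρmeas : Measurable ρ) (hρnonneg : ∀ p, 0 ≤ ρ p)
    (ξ : ℝ) (hρbound : ∀ p, ρ p ≤ ξ)
    (hti : ∀ x y z : EuclideanSpace ℝ (Fin d), ρ (x + z, y + z) = ρ (x, y))
    (hint : Integrable (fun y : EuclideanSpace ℝ (Fin d) => u y * ρ (y, 0)))
    (ε : ℝ) (hε : 0 < ε) :
    ∃ r : ℝ, 0 < r ∧
      limsup (fun ℓ : ℝ =>
        |((2 * ℓ) ^ d)⁻¹ * ∫ p in delta2 d ℓ r ∪ delta3 d ℓ r, u (p.1 - p.2) * ρ p|)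
        atTop ≤ ε :=
  delta23_limsup_general u ρ hti hint ε hε
end

section
/- Let u : ℝᵈ → ℝ be measurable and let ρ : ℝᵈ × ℝᵈ → [0,∞) be measurable, bounded, and translation invariant (ρ(x+z,y+z) = ρ(x,y) for all x,y,z). Suppose y ↦ u(y)ρ(y,0) is absolutely integrable over ℝᵈ. Then for every fixed r > 0, with Δ₁ = {(x,y) ∈ Λ_ℓ × Λ_ℓ : x ∈ Λ_{ℓ−r}, |y−x| ≤ r} (for ℓ > r), one has limsup_{ℓ→∞} | (1/|Λ_ℓ|) ∫_{Δ₁} u(x−y) ρ(x,y) d(x,y) − ∫_{ℝᵈ} u(y) ρ(y,0) dy | ≤ ∫_{|y| > r} |u(y)| ρ(y,0) dy. -/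
open MeasureTheory ENNReal Filter
open Topology Metric

/-- The diagonal region `Δ₁ = {(x,y) ∈ Λ_ℓ² : x ∈ Λ_{ℓ-r}, |y-x| ≤ r}`. -/
def delta1 (d : ℕ) (ℓ r : ℝ) :
    Set (EuclideanSpace ℝ (Fin d) × EuclideanSpace ℝ (Fin d)) :=
  {p | p.1 ∈ lam d ℓ ∧ p.2 ∈ lam d ℓ ∧ p.1 ∈ lam d (ℓ - r) ∧ ‖p.2 - p.1‖ ≤ r}

/-!
The integrand `u (x - y) ρ (x, y) = g (x - y)` with `g y = u y ρ (y, 0)` depends only on `x - y`,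
and in the coordinates `(x, x - y)` the region `Δ₁` is the product `Λ_{ℓ-r} × B̄(0, r)`.
Hence the normalised integral equals `((ℓ - r) / ℓ)^d ∫_{B̄(0,r)} g`, which tends to
`∫_{B̄(0,r)} g`; this differs from `∫ g` by the integral of `g` over the complement of the ball.
-/

section Shear

variable {G : Type*} [AddCommGroup G] [MeasurableSpace G] [MeasurableSub₂ G]

variable (G) in
def MeasurableEquiv.prodSubLeft : G × G ≃ᵐ G × G where
  toFun p := (p.1, p.1 - p.2)
  invFun p := (p.1, p.1 - p.2)
  left_inv p := by simp
  right_inv p := by simp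
  measurable_toFun := measurable_fst.prodMk (measurable_fst.sub measurable_snd)
  measurable_invFun := measurable_fst.prodMk (measurable_fst.sub measurable_snd)

@[simp]
lemma MeasurableEquiv.prodSubLeft_apply (p : G × G) :
    MeasurableEquiv.prodSubLeft G p = (p.1, p.1 - p.2) := rfl

lemma MeasurableEquiv.measurePreserving_prodSubLeft [MeasurableAdd G] [MeasurableNeg G]
    (μ ν : Measure G) [SFinite μ] [SFinite ν] [ν.IsNegInvariant] [ν.IsAddLeftInvariant] :
    MeasurePreserving (MeasurableEquiv.prodSubLeft G) (μ.prod ν) (μ.prod ν) :=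
  (MeasurePreserving.id μ).skew_product (g := fun x y => x - y)
    (measurable_fst.sub measurable_snd)
    (Eventually.of_forall fun x => (Measure.measurePreserving_sub_left ν x).map_eq)

end Shear

lemma measureReal_lam (d : ℕ) {s : ℝ} (hs : 0 ≤ s) : volume.real (lam d s) = (2 * s) ^ d := by
  have hpi : lam d s = (MeasurableEquiv.toLp 2 (Fin d → ℝ)).symm ⁻¹'
      Set.univ.pi fun _ => Set.Icc (-s) s := by
    ext x
    simp only [lam, Set.mem_ofPred_eq, Set.mem_preimage, Set.mem_univ_pi, Set.mem_Icc, abs_le]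
    rfl
  rw [measureReal_def, hpi,
    (EuclideanSpace.volume_preserving_symm_measurableEquiv_toLp (Fin d)).measure_preimage
      (MeasurableSet.univ_pi fun _ => measurableSet_Icc).nullMeasurableSet,
    volume_pi_pi]
  simp [Real.volume_Icc, toReal_ofReal (by linarith : 0 ≤ s + s), two_mul]

lemma delta1_eq_preimage (d : ℕ) (ℓ r : ℝ) :
    delta1 d ℓ r = MeasurableEquiv.prodSubLeft _ ⁻¹' (lam d (ℓ - r) ×ˢ closedBall 0 r) := by
  ext ⟨x, y⟩
  simp only [delta1, Set.mem_ofPred_eq, Set.mem_preimage, MeasurableEquiv.prodSubLeft_apply,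
    Set.mem_prod, mem_closedBall, dist_zero_right, norm_sub_rev y x]
  refine ⟨fun ⟨_, _, hx, hxy⟩ => ⟨hx, hxy⟩, fun ⟨hx, hxy⟩ => ⟨fun i => ?_, fun i => ?_, hx, hxy⟩⟩
  · have := hx i
    linarith [(norm_nonneg _).trans hxy]
  · have hcoord : |x i - y i| ≤ r := by
      simpa [Real.norm_eq_abs] using (PiLp.norm_apply_le (x - y) i).trans hxy
    calc |y i| = |x i - (x i - y i)| := by ring_nf
      _ ≤ |x i| + |x i - y i| := abs_sub _ _
      _ ≤ ℓ - r + r := add_le_add (hx i) hcoord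
      _ = ℓ := by ring

lemma setIntegral_delta1_comp_sub {d : ℕ} (g : EuclideanSpace ℝ (Fin d) → ℝ) {ℓ r : ℝ}
    (hrℓ : r ≤ ℓ) :
    ∫ p in delta1 d ℓ r, g (p.1 - p.2) = (2 * (ℓ - r)) ^ d * ∫ y in closedBall 0 r, g y := by
  have hshear := MeasurableEquiv.measurePreserving_prodSubLeft
    (volume : Measure (EuclideanSpace ℝ (Fin d))) volume
  rw [← Measure.volume_eq_prod] at hshear
  change ∫ p in delta1 d ℓ r, (fun q => g q.2) (MeasurableEquiv.prodSubLeft _ p) = _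
  rw [delta1_eq_preimage, hshear.setIntegral_preimage_emb (MeasurableEquiv.measurableEmbedding _)
    (fun q => g q.2), Measure.volume_eq_prod]
  simpa [setIntegral_const, measureReal_lam d (sub_nonneg.2 hrℓ)] using
    setIntegral_prod_mul (μ := volume) (ν := volume) (fun _ => (1 : ℝ)) g (lam d (ℓ - r))
      (closedBall 0 r)

lemma tendsto_sub_div_self_pow_atTop (a : ℝ) (n : ℕ) :
    Tendsto (fun x : ℝ => ((x - a) / x) ^ n) atTop (𝓝 1) := by
  have hlim : Tendsto (fun x : ℝ => 1 - a * x⁻¹) atTop (𝓝 1) := by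
    simpa using tendsto_const_nhds.sub (tendsto_inv_atTop_zero.const_mul a)
  have hpow : Tendsto (fun x : ℝ => (1 - a * x⁻¹) ^ n) atTop (𝓝 1) := by
    simpa using hlim.pow n
  refine hpow.congr' ?_
  filter_upwards [eventually_ne_atTop 0] with x hx
  rw [sub_div, div_self hx, div_eq_mul_inv]

lemma norm_setIntegral_sub_integral_le {α E : Type*} [MeasurableSpace α] [NormedAddCommGroup E]
    [NormedSpace ℝ E] {μ : Measure α} {f : α → E} {s : Set α} (hs : MeasurableSet s)
    (hf : Integrable f μ) :
    ‖∫ x in s, f x ∂μ - ∫ x, f x ∂μ‖ ≤ ∫ x in sᶜ, ‖f x‖ ∂μ := by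
  rw [← integral_add_compl hs hf, sub_add_cancel_left, norm_neg]
  exact norm_integral_le_integral_norm f

theorem delta1_limsup_general {d : ℕ}
    (u : EuclideanSpace ℝ (Fin d) → ℝ)
    (ρ : EuclideanSpace ℝ (Fin d) × EuclideanSpace ℝ (Fin d) → ℝ)
    (hρnonneg : ∀ p, 0 ≤ ρ p)
    (hti : ∀ x y z : EuclideanSpace ℝ (Fin d), ρ (x + z, y + z) = ρ (x, y))
    (hint : Integrable (fun y : EuclideanSpace ℝ (Fin d) => u y * ρ (y, 0)))
    (r : ℝ) :
    limsup (fun ℓ : ℝ =>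
        |((2 * ℓ) ^ d)⁻¹ * (∫ p in delta1 d ℓ r, u (p.1 - p.2) * ρ p) -
          ∫ y, u y * ρ (y, 0)|) atTop ≤
      ∫ y in {y : EuclideanSpace ℝ (Fin d) | r < ‖y‖}, |u y| * ρ (y, 0) := by
  set g : EuclideanSpace ℝ (Fin d) → ℝ := fun y => u y * ρ (y, 0)
  set c := ∫ y in closedBall 0 r, g y
  have hkernel : ∀ p : EuclideanSpace ℝ (Fin d) × EuclideanSpace ℝ (Fin d),
      u (p.1 - p.2) * ρ p = g (p.1 - p.2) := fun p => by
    simpa [g] using congrArg (u (p.1 - p.2) * ·) (hti (p.1 - p.2) 0 p.2)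
  have hev : (fun ℓ : ℝ => |((2 * ℓ) ^ d)⁻¹ * (∫ p in delta1 d ℓ r, u (p.1 - p.2) * ρ p) -
      ∫ y, g y|) =ᶠ[atTop] fun ℓ => |((ℓ - r) / ℓ) ^ d * c - ∫ y, g y| := by
    filter_upwards [eventually_ge_atTop r, eventually_gt_atTop 0] with ℓ hrℓ hℓ
    simp_rw [hkernel, setIntegral_delta1_comp_sub g hrℓ, mul_pow, div_pow]
    field_simp
    rfl
  have hlim : Tendsto (fun ℓ : ℝ => |((ℓ - r) / ℓ) ^ d * c - ∫ y, g y|) atTop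
      (𝓝 |c - ∫ y, g y|) := by
    simpa using (((tendsto_sub_div_self_pow_atTop r d).mul_const c).sub_const (∫ y, g y)).abs
  rw [limsup_congr hev, hlim.limsup_eq, ← Real.norm_eq_abs]
  refine (norm_setIntegral_sub_integral_le measurableSet_closedBall hint).trans_eq ?_
  have hcompl : (closedBall (0 : EuclideanSpace ℝ (Fin d)) r)ᶜ = {y | r < ‖y‖} := by
    ext y
    simp
  rw [hcompl]
  congr 1 with y
  rw [Real.norm_eq_abs, abs_mul, abs_of_nonneg (hρnonneg _)]

/-- For every fixed `r > 0`,
`limsup_{ℓ→∞} |(1/|Λ_ℓ|) ∫_{Δ₁} u(x-y) ρ(x,y) d(x,y) - ∫_{ℝᵈ} u(y) ρ(y,0) dy|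
  ≤ ∫_{|y| > r} |u(y)| ρ(y,0) dy`, with `|Λ_ℓ| = (2ℓ)^d`. -/
theorem delta1_limsup {d : ℕ} (hd : 1 ≤ d)
    (u : EuclideanSpace ℝ (Fin d) → ℝ) (humeas : Measurable u)
    (ρ : EuclideanSpace ℝ (Fin d) × EuclideanSpace ℝ (Fin d) → ℝ)
    (hρmeas : Measurable ρ) (hρnonneg : ∀ p, 0 ≤ ρ p)
    (ξ : ℝ) (hρbound : ∀ p, ρ p ≤ ξ)
    (hti : ∀ x y z : EuclideanSpace ℝ (Fin d), ρ (x + z, y + z) = ρ (x, y))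
    (hint : Integrable (fun y : EuclideanSpace ℝ (Fin d) => u y * ρ (y, 0)))
    (r : ℝ) (hr : 0 < r) :
    limsup (fun ℓ : ℝ =>
        |((2 * ℓ) ^ d)⁻¹ * (∫ p in delta1 d ℓ r, u (p.1 - p.2) * ρ p) -
          ∫ y, u y * ρ (y, 0)|) atTop ≤
      ∫ y in {y : EuclideanSpace ℝ (Fin d) | r < ‖y‖}, |u y| * ρ (y, 0) :=
  delta1_limsup_general u ρ hρnonneg hti hint r
end
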